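/- For the attachment-detachment model, the total mass function M_α = (α/(1-e^{-2α}))·(2 + ∫_{-1}^1 exp(-(x²-1)/2 - α(x+1)) dx) - α satisfies M_α = M_{-α} for all α ≠ 0 (with the formula extended naturally), and M_α/α → 1 as α → +∞. -/

import Mathlib

/-!
Write the integral in `M_α` as `J(α) = ∫_{-1}^{1} φ(x) e^{-α(x+1)} dx` with the even profile
`φ(x) = e^{-(x²-1)/2}`. The substitution `x ↦ -x` gives `J(α) = e^{-2α} J(-α)`, and this is exactly
the relation that makes `M_α` even in `α`. For the asymptotics, `φ ≤ e^{1/2}` gives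
`|J(α)| ≤ e^{1/2}/α`, so `M_α / α = (2 + J(α)) / (1 - e^{-2α}) - 1 → 2 - 1`.
-/

open Real Filter Topology Set

noncomputable def tiltedIntegral (φ : ℝ → ℝ) (α : ℝ) : ℝ :=
  ∫ x in (-1 : ℝ)..1, φ x * exp (-α * (x + 1))

/-- `2α / (1 - e^{-2α}) - α` is the sum of the boundary concentrations `G_α(-1) + G_α(1)`. -/
noncomputable def totalMass (φ : ℝ → ℝ) (α : ℝ) : ℝ :=
  α / (1 - exp (-2 * α)) * (2 + tiltedIntegral φ α) - α

lemma integral_exp_neg_mul_add_one {α : ℝ} (hα : α ≠ 0) :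
    ∫ x in (-1 : ℝ)..1, exp (-α * (x + 1)) = (1 - exp (-2 * α)) / α := by
  simp only [mul_add, mul_one]
  rw [intervalIntegral.integral_comp_mul_add exp (neg_ne_zero.mpr hα), integral_exp, smul_eq_mul,
    show -α * 1 + -α = -2 * α by ring, show -α * -1 + -α = 0 by ring, exp_zero]
  field_simp
  ring

lemma tiltedIntegral_eq_exp_mul_neg {φ : ℝ → ℝ} (hφ : ∀ x, φ (-x) = φ x) (α : ℝ) :
    tiltedIntegral φ α = exp (-2 * α) * tiltedIntegral φ (-α) := by
  rw [tiltedIntegral, tiltedIntegral, ← intervalIntegral.integral_const_mul]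
  have hreflect := intervalIntegral.integral_comp_neg (a := -1) (b := 1)
    fun x => φ x * exp (-α * (x + 1))
  simp only [neg_neg] at hreflect
  rw [← hreflect]
  refine intervalIntegral.integral_congr fun x _ => ?_
  simp only [hφ, ← exp_add, mul_left_comm (exp _)]
  ring_nf

lemma abs_tiltedIntegral_le {φ : ℝ → ℝ} {C α : ℝ} (hφ : ∀ x ∈ Icc (-1 : ℝ) 1, |φ x| ≤ C)
    (hα : 0 < α) : |tiltedIntegral φ α| ≤ C / α := by
  have hC : 0 ≤ C := (abs_nonneg _).trans (hφ 0 (by norm_num))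
  have hpointwise : ∀ x ∈ Ioc (-1 : ℝ) 1,
      ‖φ x * exp (-α * (x + 1))‖ ≤ C * exp (-α * (x + 1)) := fun x hx => by
    rw [Real.norm_eq_abs, abs_mul, abs_exp]
    exact mul_le_mul_of_nonneg_right (hφ x (Ioc_subset_Icc_self hx)) (exp_pos _).le
  have hbound := intervalIntegral.norm_integral_le_of_norm_le (μ := MeasureTheory.volume)
    (by norm_num : (-1 : ℝ) ≤ 1) (Eventually.of_forall hpointwise)
    (Continuous.intervalIntegrable (by fun_prop) _ _)
  rw [intervalIntegral.integral_const_mul, integral_exp_neg_mul_add_one hα.ne'] at hbound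
  calc |tiltedIntegral φ α| ≤ C * ((1 - exp (-2 * α)) / α) := hbound
    _ ≤ C * (1 / α) := by gcongr; linarith [exp_pos (-2 * α)]
    _ = C / α := mul_one_div C α

lemma tendsto_tiltedIntegral_atTop {φ : ℝ → ℝ} {C : ℝ} (hφ : ∀ x ∈ Icc (-1 : ℝ) 1, |φ x| ≤ C) :
    Tendsto (tiltedIntegral φ) atTop (𝓝 0) := by
  have hdecay : Tendsto (fun α : ℝ => C / α) atTop (𝓝 0) :=
    tendsto_const_nhds.div_atTop tendsto_id
  refine squeeze_zero_norm' ?_ hdecay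
  filter_upwards [eventually_gt_atTop 0] with α hα
  exact abs_tiltedIntegral_le hφ hα

lemma totalMass_neg {φ : ℝ → ℝ} (hφ : ∀ x, φ (-x) = φ x) {α : ℝ} (hα : α ≠ 0) :
    totalMass φ (-α) = totalMass φ α := by
  have h1 : 1 - exp (-2 * α) ≠ 0 := by
    rw [sub_ne_zero, ne_comm, Ne, exp_eq_one_iff]; simpa using hα
  have h2 : 1 - exp (-2 * -α) ≠ 0 := by
    rw [sub_ne_zero, ne_comm, Ne, exp_eq_one_iff]; simpa using hα
  have hEE' : exp (-2 * α) * exp (-2 * -α) = 1 := by rw [← exp_add]; simp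
  rw [totalMass, totalMass, tiltedIntegral_eq_exp_mul_neg hφ α]
  generalize exp (-2 * α) = E at *
  generalize exp (-2 * -α) = E' at *
  field_simp
  linear_combination (2 + tiltedIntegral φ (-α)) * hEE'

lemma tendsto_totalMass_div_atTop {φ : ℝ → ℝ} {C : ℝ} (hφ : ∀ x ∈ Icc (-1 : ℝ) 1, |φ x| ≤ C) :
    Tendsto (fun α => totalMass φ α / α) atTop (𝓝 1) := by
  have hE : Tendsto (fun α : ℝ => exp (-2 * α)) atTop (𝓝 0) :=
    tendsto_exp_atBot.comp (tendsto_id.const_mul_atTop_of_neg (by norm_num))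
  have hlim := ((tendsto_const_nhds (x := (2 : ℝ))).add (tendsto_tiltedIntegral_atTop hφ)).div
    ((tendsto_const_nhds (x := (1 : ℝ))).sub hE) (by norm_num) |>.sub_const 1
  norm_num at hlim
  refine hlim.congr' ?_
  filter_upwards [eventually_gt_atTop 0] with α hα
  have h1 : 1 - exp (-2 * α) ≠ 0 := by
    linarith [exp_lt_one_iff.mpr (by linarith : -2 * α < 0)]
  rw [totalMass]
  field_simp

/-- Symmetry M_α = M_{-α} for α ≠ 0 and asymptotics M_α/α → 1 as α → +∞,
for M_α = (α/(1-e^{-2α}))·(2 + ∫_{-1}^1 e^{-(x²-1)/2 - α(x+1)} dx) - α. -/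
theorem stmt_15 (Mass : ℝ → ℝ)
    (hMass : ∀ α : ℝ, α ≠ 0 →
      Mass α = (α / (1 - Real.exp (-2 * α))) *
          (2 + ∫ x in (-1 : ℝ)..1, Real.exp (-(x ^ 2 - 1) / 2 - α * (x + 1))) - α) :
    (∀ α : ℝ, α ≠ 0 → Mass α = Mass (-α)) ∧
      Filter.Tendsto (fun α => Mass α / α) Filter.atTop (nhds 1) := by
  set φ : ℝ → ℝ := fun x => exp (-(x ^ 2 - 1) / 2)
  have hMass_eq : ∀ α ≠ 0, Mass α = totalMass φ α := fun α hα => by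
    simp only [hMass α hα, totalMass, tiltedIntegral, φ, ← exp_add, sub_eq_add_neg, neg_mul]
  have hφ_even : ∀ x, φ (-x) = φ x := fun x => by simp only [φ, neg_sq]
  have hφ_bound : ∀ x ∈ Icc (-1 : ℝ) 1, |φ x| ≤ exp (1 / 2) := fun x _ => by
    rw [abs_exp, exp_le_exp]
    nlinarith [sq_nonneg x]
  refine ⟨fun α hα => ?_, ?_⟩
  · rw [hMass_eq α hα, hMass_eq (-α) (neg_ne_zero.mpr hα), totalMass_neg hφ_even hα]
  · refine (tendsto_totalMass_div_atTop hφ_bound).congr' ?_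
    filter_upwards [eventually_gt_atTop 0] with α hα
    rw [hMass_eq α hα.ne']
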